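/- Let μ = a_1 δ_{y_1} + a_2 δ_{y_2} with distinct y_1, y_2 ∈ ℝ and nonzero a_1, a_2 ∈ ℂ, and let Y(ω) = F[μ](ω) + W(ω), ω ∈ [−Ω, Ω], be a measurement with |W(ω)| < σ for all ω ∈ [−Ω, Ω]. Let H be the 2×2 complex Hankel matrix with rows (Y(−Ω), Y(0)) and (Y(0), Y(Ω)), and let σ̂_2 = min_{x ∈ ℂ², ‖x‖_2 = 1} ‖H x‖_2 be its smallest singular value. If there exist â ∈ ℂ and ŷ ∈ ℝ such that the one-source measure μ̂ = â δ_{ŷ} is a σ-admissible measure of Y, i.e. |â e^{i ŷ ω} − Y(ω)| < σ for all ω ∈ [−Ω, Ω], then σ̂_2 < 2σ. -/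

import Mathlib

/-! The one-source model `m(ω) = â e^{i ŷ ω}` sampled at `−Ω, 0, Ω` is geometric with ratio
`z = e^{i ŷ Ω}`, so its Hankel matrix is annihilated by the unit vector `(z, −1)/√2`.
Applied to that vector, `H` therefore only sees the residuals `Y − m`, whose entries have
modulus `< σ` by admissibility; by the Frobenius bound the image has norm `< 2σ`. -/

open Complex

lemma sq_norm_mul_add_mul_le (u v x₁ x₂ : ℂ) :
    ‖u * x₁ + v * x₂‖ ^ 2 ≤ (‖u‖ ^ 2 + ‖v‖ ^ 2) * (‖x₁‖ ^ 2 + ‖x₂‖ ^ 2) := by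
  have htri : ‖u * x₁ + v * x₂‖ ≤ ‖u‖ * ‖x₁‖ + ‖v‖ * ‖x₂‖ :=
    (norm_add_le _ _).trans_eq (by rw [norm_mul, norm_mul])
  calc ‖u * x₁ + v * x₂‖ ^ 2 ≤ (‖u‖ * ‖x₁‖ + ‖v‖ * ‖x₂‖) ^ 2 := by gcongr
    _ ≤ (‖u‖ ^ 2 + ‖v‖ ^ 2) * (‖x₁‖ ^ 2 + ‖x₂‖ ^ 2) := by
      nlinarith [sq_nonneg (‖u‖ * ‖x₂‖ - ‖v‖ * ‖x₁‖)]

lemma sqrt_norm_sq_add_norm_sq_lt_two_mul {a b c d x₁ x₂ : ℂ} {σ : ℝ}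
    (ha : ‖a‖ < σ) (hb : ‖b‖ < σ) (hc : ‖c‖ < σ) (hd : ‖d‖ < σ)
    (hx : ‖x₁‖ ^ 2 + ‖x₂‖ ^ 2 = 1) :
    Real.sqrt (‖a * x₁ + b * x₂‖ ^ 2 + ‖c * x₁ + d * x₂‖ ^ 2) < 2 * σ := by
  have hσ : 0 < σ := (norm_nonneg a).trans_lt ha
  have hrow₁ := sq_norm_mul_add_mul_le a b x₁ x₂
  have hrow₂ := sq_norm_mul_add_mul_le c d x₁ x₂
  rw [hx, mul_one] at hrow₁ hrow₂
  rw [Real.sqrt_lt' (by positivity)]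
  nlinarith [norm_nonneg a, norm_nonneg b, norm_nonneg c, norm_nonneg d]

lemma norm_sq_mul_inv_sqrt_two_add_norm_sq_neg {z : ℂ} (hz : ‖z‖ = 1) :
    ‖z * (Real.sqrt 2 : ℂ)⁻¹‖ ^ 2 + ‖-(Real.sqrt 2 : ℂ)⁻¹‖ ^ 2 = 1 := by
  rw [norm_neg, norm_mul, hz, one_mul, norm_inv, norm_real, Real.norm_eq_abs,
    abs_of_nonneg (Real.sqrt_nonneg 2), inv_pow, Real.sq_sqrt zero_le_two]
  norm_num

lemma mul_exp_add_mul_neg_eq_sub_mul_exp (a c Y₁ Y₂ : ℂ) {y ω₁ ω₂ t : ℝ}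
    (h : ω₁ + t = ω₂) :
    Y₁ * (exp (I * y * t) * c) + Y₂ * -c
      = (Y₁ - a * exp (I * y * ω₁)) * (exp (I * y * t) * c)
        + (Y₂ - a * exp (I * y * ω₂)) * -c := by
  have hshift : exp (I * y * ω₁) * exp (I * y * t) = exp (I * y * ω₂) := by
    rw [← exp_add, ← h]
    push_cast
    ring_nf
  linear_combination (a * c) * hshift

theorem hankel_min_singular_value_one_source_admissible
    (Ω σ : ℝ) (hΩ : 0 < Ω)
    (Y : ℝ → ℂ)
    (σ₂ : ℝ)
    (hσ₂ : σ₂ = sInf {r : ℝ | ∃ x₁ x₂ : ℂ,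
      ‖x₁‖ ^ 2 + ‖x₂‖ ^ 2 = 1 ∧
      r = Real.sqrt (‖Y (-Ω) * x₁ + Y 0 * x₂‖ ^ 2
        + ‖Y 0 * x₁ + Y Ω * x₂‖ ^ 2)})
    (hadm : ∃ (ah : ℂ) (yh : ℝ), ∀ ω ∈ Set.Icc (-Ω) Ω,
      ‖ah * Complex.exp (Complex.I * (yh : ℂ) * (ω : ℂ)) - Y ω‖ < σ) :
    σ₂ < 2 * σ := by
  obtain ⟨ah, yh, hadm⟩ := hadm
  have hres : ∀ ω ∈ Set.Icc (-Ω) Ω, ‖Y ω - ah * exp (I * yh * ω)‖ < σ :=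
    fun ω hω => norm_sub_rev (Y ω) _ ▸ hadm ω hω
  have hz : ‖exp (I * yh * Ω)‖ = 1 := by
    rw [show I * yh * Ω = ((yh * Ω : ℝ) : ℂ) * I by push_cast; ring]
    exact norm_exp_ofReal_mul_I _
  set z := exp (I * yh * Ω)
  set c := (Real.sqrt 2 : ℂ)⁻¹
  have hx : ‖z * c‖ ^ 2 + ‖-c‖ ^ 2 = 1 := norm_sq_mul_inv_sqrt_two_add_norm_sq_neg hz
  have hbdd : BddBelow {r : ℝ | ∃ x₁ x₂ : ℂ, ‖x₁‖ ^ 2 + ‖x₂‖ ^ 2 = 1 ∧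
      r = Real.sqrt (‖Y (-Ω) * x₁ + Y 0 * x₂‖ ^ 2 + ‖Y 0 * x₁ + Y Ω * x₂‖ ^ 2)} :=
    ⟨0, by rintro _ ⟨_, _, -, rfl⟩; positivity⟩
  rw [hσ₂]
  refine (csInf_le hbdd ⟨z * c, -c, hx, rfl⟩).trans_lt ?_
  rw [mul_exp_add_mul_neg_eq_sub_mul_exp ah c (Y (-Ω)) (Y 0) (neg_add_cancel Ω),
    mul_exp_add_mul_neg_eq_sub_mul_exp ah c (Y 0) (Y Ω) (zero_add Ω)]
  have hleft : -Ω ∈ Set.Icc (-Ω) Ω := ⟨le_rfl, by linarith⟩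
  have hzero : (0 : ℝ) ∈ Set.Icc (-Ω) Ω := ⟨by linarith, hΩ.le⟩
  have hright : Ω ∈ Set.Icc (-Ω) Ω := ⟨by linarith, le_rfl⟩
  exact sqrt_norm_sq_add_norm_sq_lt_two_mul (hres _ hleft) (hres _ hzero) (hres _ hzero)
    (hres _ hright) hx
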